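/- If S is an uncountable ω₁-compact subset of a tree of height ω₁ and S contains no uncountable chain, then the downward closure S↓ is a Suslin tree (height ω₁, all chains and antichains countable). -/

import Mathlib

open Set Topology Cardinal Ordinal

universe u v

/-- The order (interval) topology of a tree. -/
def treeTopology (T : Type u) [PartialOrder T] : TopologicalSpace T :=
  TopologicalSpace.generateFrom
    ({s | ∃ a b : T, a < b ∧ s = Set.Ioc a b} ∪
     {s | ∃ b : T, (∀ a : T, ¬a < b) ∧ s = {b}})

/-- A tree order: the predecessors of every element are well-ordered. -/
def IsTreeOrder (T : Type u) [PartialOrder T] : Prop :=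
  ∀ x : T, IsWellOrder {y : T // y < x} (· < ·)

/-- The height of an element: the order type of its set of predecessors. -/
noncomputable def treeHeight {T : Type u} [PartialOrder T] (hT : IsTreeOrder T) (x : T) :
    Ordinal.{u} :=
  @Ordinal.type {y : T // y < x} (· < ·) (hT x)

/-- Hausdorff tree: elements at limit levels are determined by their predecessors. -/
def IsHausdorffTree (T : Type u) [PartialOrder T] : Prop :=
  ∀ x y : T, Set.Iio x = Set.Iio y → (Set.Iio x).Nonempty →
    (∀ z ∈ Set.Iio x, ∃ w ∈ Set.Iio x, z < w) → x = y

/-- The tree has height ω₁. -/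
def HasHeightOmega1 {T : Type u} [PartialOrder T] (hT : IsTreeOrder T) : Prop :=
  (∀ x : T, treeHeight hT x < ω₁) ∧ ∀ α < ω₁, ∃ x : T, treeHeight hT x = α

/-- Downward closure of a subset of a tree. -/
def downClosure {T : Type u} [PartialOrder T] (S : Set T) : Set T := {x | ∃ y ∈ S, x ≤ y}

/-- `D` is a closed discrete subset of the subspace `S`. -/
def ClosedDiscreteIn {T : Type u} [TopologicalSpace T] (D S : Set T) : Prop :=
  D ⊆ S ∧ closure D ∩ S ⊆ D ∧ ∀ x ∈ D, ∃ U : Set T, IsOpen U ∧ x ∈ U ∧ U ∩ D = {x}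

/-- `S` is ω₁-compact in the subspace topology: every closed discrete subset is countable. -/
def OmegaOneCompactIn {T : Type u} [TopologicalSpace T] (S : Set T) : Prop :=
  ∀ D : Set T, ClosedDiscreteIn D S → D.Countable

/-- A club (closed unbounded) subset of `ω₁` (as a set of ordinals, with the order topology). -/
def IsClubBelowOmega1 (C : Set Ordinal.{u}) : Prop :=
  C ⊆ Set.Iio ω₁ ∧ (∀ α < ω₁, ∃ β ∈ C, α ≤ β) ∧ ∀ α < ω₁, α ∈ closure C → α ∈ C

/-- A stationary subset of `ω₁`. -/
def IsStationaryBelowOmega1 (S : Set Ordinal.{u}) : Prop :=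
  S ⊆ Set.Iio ω₁ ∧ ∀ C : Set Ordinal.{u}, IsClubBelowOmega1 C → (S ∩ C).Nonempty

/-! Antichains are closed discrete in the tree topology, since every point `x` has a
neighbourhood inside `Iic x` (either `Ioc a x` or `{x}`). Hence antichains of `S` are countable,
and so are those of `S↓`: incomparable points have distinct upper bounds in `S`. Levels are
antichains, so the uncountable set `S` reaches every height below `ω₁`. Finally, every point of a
chain `c ⊆ S↓` lies below a point of `S` on the branch `c↓`, which is a chain of `S`, or below a
minimal point off that branch, and these minimal points form an antichain of `S↓`; since every
point has only countably many predecessors, `c` is countable. -/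

section Tree

variable {T : Type u} [PartialOrder T]

theorem IsTreeOrder.isChain_Iic (hT : IsTreeOrder T) (s : T) : IsChain (· ≤ ·) (Iic s) := by
  intro a ha b hb _
  rcases (show a ≤ s from ha).lt_or_eq with has | rfl
  · rcases (show b ≤ s from hb).lt_or_eq with hbs | rfl
    · have := hT s
      rcases trichotomous_of (· < ·) (⟨a, has⟩ : {y // y < s}) ⟨b, hbs⟩ with h | h | h
      exacts [Or.inl h.le, Or.inl (congrArg Subtype.val h).le, Or.inr h.le]
    · exact Or.inl ha
  · exact Or.inr hb

theorem IsTreeOrder.wellFoundedLT (hT : IsTreeOrder T) : WellFoundedLT T := by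
  refine ⟨⟨fun x => ⟨x, fun y hy => ?_⟩⟩⟩
  have := hT x
  suffices ∀ z : {y // y < x}, Acc (· < ·) z.1 from this ⟨y, hy⟩
  intro z
  induction z using WellFoundedLT.induction with
  | _ z ih => exact ⟨z.1, fun w hw => ih ⟨w, hw.trans z.2⟩ hw⟩

theorem isChain_downClosure (hT : IsTreeOrder T) {c : Set T} (hc : IsChain (· ≤ ·) c) :
    IsChain (· ≤ ·) (downClosure c) := by
  rintro x ⟨y, hy, hxy⟩ x' ⟨y', hy', hxy'⟩ -
  rcases hc.total hy hy' with h | h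
  · exact (hT.isChain_Iic y').total (hxy.trans h) hxy'
  · exact (hT.isChain_Iic y).total hxy (hxy'.trans h)

theorem IsAntichain.eq_of_le_of_le (hT : IsTreeOrder T) {A : Set T}
    (hA : IsAntichain (· ≤ ·) A) {a b s : T} (ha : a ∈ A) (hb : b ∈ A) (has : a ≤ s)
    (hbs : b ≤ s) : a = b := by
  rcases (hT.isChain_Iic s).total has hbs with h | h
  exacts [hA.eq ha hb h, (hA.eq hb ha h).symm]

theorem countable_downClosure {S : Set T} (hIic : ∀ x : T, (Iic x).Countable)
    (hS : S.Countable) : (downClosure S).Countable :=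
  (hS.biUnion fun s _ => hIic s).mono fun _ ⟨_, hs, hxs⟩ => mem_biUnion hs hxs

theorem IsAntichain.countable_of_subset_downClosure (hT : IsTreeOrder T) {S A : Set T}
    (hS : ∀ B ⊆ S, IsAntichain (· ≤ ·) B → B.Countable) (hAS : A ⊆ downClosure S)
    (hA : IsAntichain (· ≤ ·) A) : A.Countable := by
  have hAS : ∀ a ∈ A, ∃ s ∈ S, a ≤ s := hAS
  choose! g hgS hag using hAS
  have himage : IsAntichain (· ≤ ·) (g '' A) := by
    rintro _ ⟨a, ha, rfl⟩ _ ⟨a', ha', rfl⟩ hne hle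
    exact hne (congrArg g (hA.eq_of_le_of_le hT ha ha' ((hag a ha).trans hle) (hag a' ha')))
  refine (mapsTo_image g A).countable_of_injOn (fun a ha a' ha' h => ?_)
    (hS _ (image_subset_iff.2 hgS) himage)
  exact hA.eq_of_le_of_le hT ha ha' (hag a ha) (h ▸ hag a' ha')

theorem IsChain.countable_of_subset_downClosure (hT : IsTreeOrder T) {S c : Set T}
    (hIic : ∀ x : T, (Iic x).Countable)
    (hchain : ∀ d ⊆ S, IsChain (· ≤ ·) d → d.Countable)
    (hanti : ∀ A ⊆ downClosure S, IsAntichain (· ≤ ·) A → A.Countable)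
    (hc : IsChain (· ≤ ·) c) (hcS : c ⊆ downClosure S) : c.Countable := by
  have := hT.wellFoundedLT
  set b := downClosure c
  set M := {u ∈ downClosure S | Minimal (· ∉ b) u}
  have hSb : (S ∩ b).Countable :=
    hchain _ inter_subset_left ((isChain_downClosure hT hc).mono inter_subset_right)
  have hM : M.Countable :=
    hanti M (fun _ hu => hu.1) ((setOfPred_minimal_antichain _).subset fun _ hu => hu.2)
  refine (countable_downClosure hIic (hSb.union hM)).mono fun x hx => ?_
  obtain ⟨s, hs, hxs⟩ := hcS hx
  by_cases hsb : s ∈ b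
  · exact ⟨s, Or.inl ⟨hs, hsb⟩, hxs⟩
  obtain ⟨u, hus, hu⟩ := exists_minimal_le_of_wellFoundedLT (· ∉ b) s hsb
  refine ⟨u, Or.inr ⟨⟨s, hs, hus⟩, hu⟩, ?_⟩
  rcases (hT.isChain_Iic s).total hxs hus with hxu | hux
  exacts [hxu, absurd ⟨x, hx, hux⟩ hu.prop]

end Tree

section Height

variable {T : Type u} [PartialOrder T]

theorem treeHeight_eq_typein (hT : IsTreeOrder T) {x s : T} (h : x < s) :
    treeHeight hT x = @Ordinal.typein {y : T // y < s} (· < ·) (hT s) ⟨x, h⟩ := by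
  have := hT s
  have := hT x
  rw [← Ordinal.type_subrel]
  exact Ordinal.type_eq.2
    ⟨⟨⟨fun z => ⟨⟨z.1, z.2.trans h⟩, show (⟨z.1, z.2.trans h⟩ : {y : T // y < s}) < ⟨x, h⟩ from z.2⟩,
      fun w => ⟨w.1.1, show w.1.1 < x from w.2⟩, fun _ => rfl, fun _ => rfl⟩, Iff.rfl⟩⟩

theorem treeHeight_strictMono (hT : IsTreeOrder T) : StrictMono (treeHeight hT) := by
  intro _ s h
  have := hT s
  rw [treeHeight_eq_typein hT h]
  exact Ordinal.typein_lt_type _ _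

theorem exists_le_treeHeight_eq (hT : IsTreeOrder T) {s : T} {α : Ordinal.{u}}
    (hα : α ≤ treeHeight hT s) : ∃ x ≤ s, treeHeight hT x = α := by
  rcases hα.lt_or_eq with h | rfl
  · have := hT s
    set x := Ordinal.enum (α := {y : T // y < s}) (· < ·) ⟨α, h⟩
    refine ⟨x.1, x.2.le, ?_⟩
    rw [treeHeight_eq_typein hT x.2]
    exact Ordinal.typein_enum _ h
  · exact ⟨s, le_rfl, rfl⟩

theorem countable_Iic_of_treeHeight_lt (hT : IsTreeOrder T) {x : T}
    (hx : treeHeight hT x < ω₁) : (Iic x).Countable := by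
  have := hT x
  have hcard : (treeHeight hT x).card = #(Iio x) := Ordinal.card_type _
  rwa [← Iio_insert, countable_insert, ← le_aleph0_iff_set_countable, ← hcard,
    ← Cardinal.lt_aleph_one_iff, ← Cardinal.lt_ord, Cardinal.ord_aleph]

theorem Ordinal.countable_Iio_of_lt_omega_one {α : Ordinal.{u}} (h : α < ω₁) :
    (Iio α).Countable := by
  rwa [← le_aleph0_iff_set_countable, Cardinal.mk_Iio_ordinal, Cardinal.lift_le_aleph0,
    ← Cardinal.lt_aleph_one_iff, ← Cardinal.lt_ord, Cardinal.ord_aleph]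

theorem countable_of_forall_treeHeight_lt (hT : IsTreeOrder T) {P : Set T}
    (hP : ∀ A ⊆ P, IsAntichain (· ≤ ·) A → A.Countable) {α : Ordinal.{u}} (hα : α < ω₁)
    (h : ∀ x ∈ P, treeHeight hT x < α) : P.Countable := by
  have hlevel (β : Ordinal.{u}) : IsAntichain (· ≤ ·) {x ∈ P | treeHeight hT x = β} := by
    rintro x ⟨-, hx⟩ y ⟨-, hy⟩ hne hxy
    exact (treeHeight_strictMono hT (hxy.lt_of_ne hne)).ne (hx.trans hy.symm)
  refine ((Ordinal.countable_Iio_of_lt_omega_one hα).biUnion fun β _ =>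
    hP _ (sep_subset _ _) (hlevel β)).mono fun x hx => ?_
  exact mem_biUnion (mem_Iio.2 (h x hx)) ⟨hx, rfl⟩

end Height

section Topology

variable {T : Type u} [PartialOrder T] [tT : TopologicalSpace T]

theorem isOpen_Ioc_of_eq_treeTopology (htop : tT = treeTopology T) {a b : T} (h : a < b) :
    IsOpen (Ioc a b) := by
  subst htop
  exact TopologicalSpace.isOpen_generateFrom_of_mem (Or.inl ⟨a, b, h, rfl⟩)

theorem exists_isOpen_mem_subset_Iic (htop : tT = treeTopology T) (x : T) :
    ∃ U : Set T, IsOpen U ∧ x ∈ U ∧ U ⊆ Iic x := by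
  by_cases hx : ∃ a, a < x
  · obtain ⟨a, ha⟩ := hx
    exact ⟨Ioc a x, isOpen_Ioc_of_eq_treeTopology htop ha, ⟨ha, le_rfl⟩, Ioc_subset_Iic_self⟩
  · subst htop
    exact ⟨{x}, TopologicalSpace.isOpen_generateFrom_of_mem (Or.inr ⟨x, not_exists.1 hx, rfl⟩), rfl,
      singleton_subset_iff.2 le_rfl⟩

theorem IsAntichain.closedDiscreteIn (htop : tT = treeTopology T) {A S : Set T}
    (hA : IsAntichain (· ≤ ·) A) (hAS : A ⊆ S) : ClosedDiscreteIn A S := by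
  refine ⟨hAS, fun z ⟨hz, _⟩ => ?_, fun x hx => ?_⟩
  · obtain ⟨U, hU, hzU, hUz⟩ := exists_isOpen_mem_subset_Iic htop z
    obtain ⟨a, haU, haA⟩ := mem_closure_iff.1 hz U hU hzU
    rcases (hUz haU).lt_or_eq with haz | rfl
    · obtain ⟨a', ⟨haa', -⟩, ha'A⟩ :=
        mem_closure_iff.1 hz _ (isOpen_Ioc_of_eq_treeTopology htop haz) ⟨haz, le_rfl⟩
      exact absurd (hA.eq haA ha'A haa'.le) haa'.ne
    · exact haA
  · obtain ⟨U, hU, hxU, hUx⟩ := exists_isOpen_mem_subset_Iic htop x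
    refine ⟨U, hU, hxU, subset_antisymm (fun y hy => hA.eq hy.2 hx (hUx hy.1)) ?_⟩
    exact singleton_subset_iff.2 ⟨hxU, hx⟩

end Topology

theorem downClosure_suslin_of_omegaOneCompact_general {T : Type u} [PartialOrder T]
    [tT : TopologicalSpace T] (htop : tT = treeTopology T)
    (hT : IsTreeOrder T) (hht : HasHeightOmega1 hT)
    (S : Set T) (hSu : ¬S.Countable) (hSc : OmegaOneCompactIn S)
    (hnochain : ∀ c ⊆ S, IsChain (· ≤ ·) c → c.Countable) :
    (∀ α < ω₁, ∃ x ∈ downClosure S, treeHeight hT x = α) ∧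
    (∀ c ⊆ downClosure S, IsChain (· ≤ ·) c → c.Countable) ∧
    (∀ A ⊆ downClosure S, IsAntichain (· ≤ ·) A → A.Countable) := by
  have hantiS : ∀ A ⊆ S, IsAntichain (· ≤ ·) A → A.Countable := fun A hAS hA =>
    hSc A (hA.closedDiscreteIn htop hAS)
  have hanti : ∀ A ⊆ downClosure S, IsAntichain (· ≤ ·) A → A.Countable := fun A hAS hA =>
    hA.countable_of_subset_downClosure hT hantiS hAS
  have hIic (x : T) : (Iic x).Countable := countable_Iic_of_treeHeight_lt hT (hht.1 x)
  refine ⟨fun α hα => ?_, fun c hcS hc =>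
    hc.countable_of_subset_downClosure hT hIic hnochain hanti hcS, hanti⟩
  obtain ⟨s, hs, hαs⟩ : ∃ s ∈ S, α ≤ treeHeight hT s := by
    by_contra! h
    exact hSu (countable_of_forall_treeHeight_lt hT hantiS hα h)
  obtain ⟨x, hxs, rfl⟩ := exists_le_treeHeight_eq hT hαs
  exact ⟨x, ⟨s, hs, hxs⟩, rfl⟩

/-- If S is an uncountable ω₁-compact subset of a (Hausdorff) tree of height
ω₁ containing no uncountable chain, then the downward closure S↓ is a Suslin tree: it has
height ω₁ and all of its chains and antichains are countable. -/
theorem downClosure_suslin_of_omegaOneCompact {T : Type u} [PartialOrder T]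
    [tT : TopologicalSpace T] (htop : tT = treeTopology T)
    (hT : IsTreeOrder T) (hH : IsHausdorffTree T) (hht : HasHeightOmega1 hT)
    (S : Set T) (hSu : ¬S.Countable) (hSc : OmegaOneCompactIn S)
    (hnochain : ∀ c ⊆ S, IsChain (· ≤ ·) c → c.Countable) :
    (∀ α < ω₁, ∃ x ∈ downClosure S, treeHeight hT x = α) ∧
    (∀ c ⊆ downClosure S, IsChain (· ≤ ·) c → c.Countable) ∧
    (∀ A ⊆ downClosure S, IsAntichain (· ≤ ·) A → A.Countable) :=
  downClosure_suslin_of_omegaOneCompact_general (tT := tT) htop hT hht S hSu hSc hnochain
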